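/- arXiv:1305.0848 — 8 statements merged into one kernel-verified Lean document; each statement's English description precedes it below -/
import Mathlib

section
/- If P_{ABE} is an unambiguous tripartite probability distribution (for every pair of values of two of the variables, at most one value of the third variable has nonzero probability), and a new joint distribution P_{AM,BM,EM} is formed by appending to all three parties a public message M generated from A via a conditional distribution q(m|a), then P_{AM,BM,EM} is also unambiguous. -/
/-! The extended distribution vanishes unless the three copies of the message agree and `p`
does not vanish, so two support points sharing two coordinates share their message and, by
unambiguity of `p`, their remaining original coordinate. -/

/-- A tripartite probability distribution is *unambiguous* if for every pair of
values of two of the variables, at most one value of the third variable has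
nonzero probability. -/
def Unambiguous {A B E : Type*} (p : A → B → E → ℝ) : Prop :=
  (∀ b e, {a | p a b e ≠ 0}.Subsingleton) ∧
  (∀ a e, {b | p a b e ≠ 0}.Subsingleton) ∧
  (∀ a b, {e | p a b e ≠ 0}.Subsingleton)

theorem Unambiguous.of_ne_zero_imp_diag {A B E M : Type*} {p : A → B → E → ℝ}
    (hp : Unambiguous p) {p' : A × M → B × M → E × M → ℝ}
    (hsupp : ∀ a m b m' e m'', p' (a, m) (b, m') (e, m'') ≠ 0 →
      m = m' ∧ m' = m'' ∧ p a b e ≠ 0) :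
    Unambiguous p' := by
  obtain ⟨hA, hB, hE⟩ := hp
  refine ⟨?_, ?_, ?_⟩
  · rintro ⟨b, m'⟩ ⟨e, m''⟩ ⟨a₁, m₁⟩ h₁ ⟨a₂, m₂⟩ h₂
    obtain ⟨hm₁, -, hp₁⟩ := hsupp _ _ _ _ _ _ h₁
    obtain ⟨hm₂, -, hp₂⟩ := hsupp _ _ _ _ _ _ h₂
    exact Prod.ext (hA b e hp₁ hp₂) (hm₁.trans hm₂.symm)
  · rintro ⟨a, m⟩ ⟨e, m''⟩ ⟨b₁, m₁⟩ h₁ ⟨b₂, m₂⟩ h₂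
    obtain ⟨hm₁, -, hp₁⟩ := hsupp _ _ _ _ _ _ h₁
    obtain ⟨hm₂, -, hp₂⟩ := hsupp _ _ _ _ _ _ h₂
    exact Prod.ext (hB a e hp₁ hp₂) (hm₁.symm.trans hm₂)
  · rintro ⟨a, m⟩ ⟨b, m'⟩ ⟨e₁, m₁⟩ h₁ ⟨e₂, m₂⟩ h₂
    obtain ⟨-, hm₁, hp₁⟩ := hsupp _ _ _ _ _ _ h₁
    obtain ⟨-, hm₂, hp₂⟩ := hsupp _ _ _ _ _ _ h₂
    exact Prod.ext (hE a b hp₁ hp₂) (hm₁.symm.trans hm₂)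

theorem stmt_0_general {A B E M : Type*}
    [DecidableEq M]
    (p : A → B → E → ℝ) (q : M → A → ℝ)
    (hunamb : Unambiguous p)
    (p' : A × M → B × M → E × M → ℝ)
    (hp' : ∀ a m b m' e m'', p' (a, m) (b, m') (e, m'') =
      if m = m' ∧ m' = m'' then p a b e * q m a else 0) :
    Unambiguous p' :=
  hunamb.of_ne_zero_imp_diag fun a m b m' e m'' h => by
    rw [hp', ite_ne_right_iff] at h
    exact ⟨h.1.1, h.1.2, left_ne_zero_of_mul h.2⟩

/-- Appending a public message generated from `A` preserves unambiguity. -/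
theorem stmt_0 {A B E M : Type*} [Fintype A] [Fintype B] [Fintype E] [Fintype M]
    [DecidableEq M]
    (p : A → B → E → ℝ) (q : M → A → ℝ)
    (hp0 : ∀ a b e, 0 ≤ p a b e)
    (hp1 : ∑ a, ∑ b, ∑ e, p a b e = 1)
    (hq0 : ∀ m a, 0 ≤ q m a)
    (hq1 : ∀ a, ∑ m, q m a = 1)
    (hunamb : Unambiguous p)
    (p' : A × M → B × M → E × M → ℝ)
    (hp' : ∀ a m b m' e m'', p' (a, m) (b, m') (e, m'') =
      if m = m' ∧ m' = m'' then p a b e * q m a else 0) :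
    Unambiguous p' :=
  stmt_0_general p q hunamb p' hp'
end

section
/- If a tripartite distribution P_{ABE} satisfies the condition that for all b,e at most one a has p(a,b,e) ≠ 0, then the distribution P_{AM,BM,EM} obtained by appending a public message M generated from A also satisfies this same condition (the lemma holds separately for each of the three unambiguity conditions). -/
theorem eq_and_ne_zero_of_appendMessage_ne_zero {A B E M R : Type*} [DecidableEq M] [MulZeroClass R]
    {p : A → B → E → R} {q : M → A → R} {p' : A × M → B × M → E × M → R}
    (hp' : ∀ a m b m' e m'', p' (a, m) (b, m') (e, m'') =
      if m = m' ∧ m' = m'' then p a b e * q m a else 0)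
    {a : A} {b : B} {e : E} {m m' m'' : M} (h : p' (a, m) (b, m') (e, m'') ≠ 0) :
    m = m' ∧ p a b e ≠ 0 := by
  rw [hp'] at h
  split_ifs at h with hm
  · exact ⟨hm.1, left_ne_zero_of_mul h⟩
  · exact absurd rfl h

theorem stmt_1_general {A B E M : Type*}
    [DecidableEq M]
    (p : A → B → E → ℝ) (q : M → A → ℝ)
    (hA : ∀ b e, {a | p a b e ≠ 0}.Subsingleton)
    (p' : A × M → B × M → E × M → ℝ)
    (hp' : ∀ a m b m' e m'', p' (a, m) (b, m') (e, m'') =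
      if m = m' ∧ m' = m'' then p a b e * q m a else 0) :
    ∀ bm : B × M, ∀ em : E × M, {am : A × M | p' am bm em ≠ 0}.Subsingleton := by
  rintro ⟨b, mb⟩ ⟨e, me⟩ ⟨a, m⟩ h ⟨a', m'⟩ h'
  obtain ⟨rfl, ha⟩ := eq_and_ne_zero_of_appendMessage_ne_zero hp' h
  obtain ⟨rfl, ha'⟩ := eq_and_ne_zero_of_appendMessage_ne_zero hp' h'
  rw [hA b e ha ha']

/-- If for all `b, e` at most one `a` has `p a b e ≠ 0`, then the distribution
obtained by appending a public message `M` generated from `A` satisfies the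
same condition. -/
theorem stmt_1 {A B E M : Type*} [Fintype A] [Fintype B] [Fintype E] [Fintype M]
    [DecidableEq M]
    (p : A → B → E → ℝ) (q : M → A → ℝ)
    (hp0 : ∀ a b e, 0 ≤ p a b e)
    (hp1 : ∑ a, ∑ b, ∑ e, p a b e = 1)
    (hq0 : ∀ m a, 0 ≤ q m a)
    (hq1 : ∀ a, ∑ m, q m a = 1)
    (hA : ∀ b e, {a | p a b e ≠ 0}.Subsingleton)
    (p' : A × M → B × M → E × M → ℝ)
    (hp' : ∀ a m b m' e m'', p' (a, m) (b, m') (e, m'') =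
      if m = m' ∧ m' = m'' then p a b e * q m a else 0) :
    ∀ bm : B × M, ∀ em : E × M, {am : A × M | p' am bm em ≠ 0}.Subsingleton :=
  stmt_1_general p q hA p' hp'
end

section
/- Let P_{ABE} be an unambiguous tripartite distribution. Then the conditional Shannon entropies satisfy H(B|A) = H(E|A), where entropies are computed with respect to the joint distribution p(a,b,e). -/
/-
For each fixed `a`, unambiguity makes `b ↦ e` (on the support of `p a · ·`) a bijection, so the
marginal weights `p(a,b) = ∑ₑ p(a,b,e)` and `p(a,e) = ∑_b p(a,b,e)` are each a single atom
`p(a,b,e)`. Hence both `H(AB)` and `H(AE)` equal `∑_{a,b,e} -p log p`, and subtracting `H(A)`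
gives `H(B|A) = H(E|A)`.
-/

open Finset

/-- Shannon entropy of a finitely supported distribution (natural log). -/
noncomputable def Hent {X : Type*} [Fintype X] (p : X → ℝ) : ℝ :=
  ∑ x, Real.negMulLog (p x)

lemma Finset.apply_sum_of_support_subsingleton {ι M N : Type*} [AddCommMonoid M]
    [AddCommMonoid N] (g : M → N) (hg : g 0 = 0) (s : Finset ι) {f : ι → M}
    (hf : (Function.support f).Subsingleton) :
    g (∑ i ∈ s, f i) = ∑ i ∈ s, g (f i) := by
  rcases hf.eq_empty_or_singleton with hempty | ⟨i₀, hi₀⟩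
  · simp_all [Function.support_eq_empty_iff]
  · have hzero : ∀ i ≠ i₀, f i = 0 := fun i hi =>
      Function.notMem_support.mp (hi₀ ▸ hi)
    by_cases hmem : i₀ ∈ s
    · rw [sum_eq_single_of_mem i₀ hmem fun i _ hi => hzero i hi,
        sum_eq_single_of_mem i₀ hmem fun i _ hi => by rw [hzero i hi, hg]]
    · rw [sum_eq_zero fun i hi => hzero i (ne_of_mem_of_not_mem hi hmem),
        sum_eq_zero fun i hi => by rw [hzero i (ne_of_mem_of_not_mem hi hmem), hg], hg]

lemma Hent_sum_of_support_subsingleton {X Y : Type*} [Fintype X] [Fintype Y] (q : X → Y → ℝ)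
    (hq : ∀ x, (Function.support (q x)).Subsingleton) :
    Hent (fun x => ∑ y, q x y) = ∑ x, ∑ y, Real.negMulLog (q x y) :=
  sum_congr rfl fun x _ =>
    apply_sum_of_support_subsingleton _ Real.negMulLog_zero _ (hq x)

theorem stmt_2_general {A B E : Type*} [Fintype A] [Fintype B] [Fintype E]
    (p : A → B → E → ℝ)
    (hunamb : Unambiguous p) :
    (Hent fun ab : A × B => ∑ e, p ab.1 ab.2 e) -
      (Hent fun a => ∑ b, ∑ e, p a b e) =
    (Hent fun ae : A × E => ∑ b, p ae.1 b ae.2) -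
      (Hent fun a => ∑ b, ∑ e, p a b e) := by
  obtain ⟨-, hB, hE⟩ := hunamb
  have hAB := Hent_sum_of_support_subsingleton (fun (ab : A × B) e => p ab.1 ab.2 e)
    fun ab => hE ab.1 ab.2
  have hAE := Hent_sum_of_support_subsingleton (fun (ae : A × E) b => p ae.1 b ae.2)
    fun ae => hB ae.1 ae.2
  rw [hAB, hAE, Fintype.sum_prod_type, Fintype.sum_prod_type]
  congr 1
  exact sum_congr rfl fun a _ => sum_comm

/-- For an unambiguous tripartite distribution, `H(B|A) = H(E|A)`. -/
theorem stmt_2 {A B E : Type*} [Fintype A] [Fintype B] [Fintype E]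
    (p : A → B → E → ℝ)
    (hp0 : ∀ a b e, 0 ≤ p a b e)
    (hp1 : ∑ a, ∑ b, ∑ e, p a b e = 1)
    (hunamb : Unambiguous p) :
    (Hent fun ab : A × B => ∑ e, p ab.1 ab.2 e) -
      (Hent fun a => ∑ b, ∑ e, p a b e) =
    (Hent fun ae : A × E => ∑ b, p ae.1 b ae.2) -
      (Hent fun a => ∑ b, ∑ e, p a b e) :=
  stmt_2_general p hunamb
end

section
/- Let P_{ABE} be an unambiguous tripartite distribution. Then the advantage A(P_{ABE}) := I(A;B) − I(A;E) equals H(B) − H(E), where all quantities are Shannon (conditional) entropies and mutual informations of the marginals of p. -/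
/-! Unambiguity makes each pair marginal carry the full entropy of `p`, because the third
variable is determined by the other two: `H(AB) = H(ABE) = H(AE)`. The advantage
`(H(A) + H(B) - H(AB)) - (H(A) + H(E) - H(AE))` therefore collapses to `H(B) - H(E)`. -/

open Finset

theorem Real.negMulLog_sum_of_subsingleton {X : Type*} [Fintype X] (f : X → ℝ)
    (h : {x | f x ≠ 0}.Subsingleton) :
    Real.negMulLog (∑ x, f x) = ∑ x, Real.negMulLog (f x) := by
  by_cases hz : ∀ x, f x = 0
  · simp [hz]
  obtain ⟨x₀, hx₀⟩ := not_forall.mp hz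
  have hzero : ∀ x ∈ univ, x ≠ x₀ → f x = 0 := fun x _ hne =>
    by_contra fun hfx => hne (h hfx hx₀)
  rw [sum_eq_single x₀ hzero (by simp),
    sum_eq_single x₀ (fun x hx hne => by simp [hzero x hx hne]) (by simp)]

theorem Hent_pair_marginal_of_subsingleton {X Y Z : Type*} [Fintype X] [Fintype Y] [Fintype Z]
    (q : X → Y → Z → ℝ) (h : ∀ x y, {z | q x y z ≠ 0}.Subsingleton) :
    (Hent fun xy : X × Y => ∑ z, q xy.1 xy.2 z) = ∑ x, ∑ y, ∑ z, Real.negMulLog (q x y z) := by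
  rw [Hent, Fintype.sum_prod_type]
  exact sum_congr rfl fun x _ => sum_congr rfl fun y _ =>
    Real.negMulLog_sum_of_subsingleton _ (h x y)

theorem stmt_3_general {A B E : Type*} [Fintype A] [Fintype B] [Fintype E]
    (p : A → B → E → ℝ)
    (hunamb : Unambiguous p) :
    (((Hent fun a => ∑ b, ∑ e, p a b e) + (Hent fun b => ∑ a, ∑ e, p a b e)
        - (Hent fun ab : A × B => ∑ e, p ab.1 ab.2 e)) -
     ((Hent fun a => ∑ b, ∑ e, p a b e) + (Hent fun e => ∑ a, ∑ b, p a b e)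
        - (Hent fun ae : A × E => ∑ b, p ae.1 b ae.2))) =
    (Hent fun b => ∑ a, ∑ e, p a b e) - (Hent fun e => ∑ a, ∑ b, p a b e) := by
  obtain ⟨-, hB, hE⟩ := hunamb
  have hAB := Hent_pair_marginal_of_subsingleton p hE
  have hAE := Hent_pair_marginal_of_subsingleton (fun a e b => p a b e) hB
  have hjoint : ∑ a, ∑ e, ∑ b, Real.negMulLog (p a b e)
      = ∑ a, ∑ b, ∑ e, Real.negMulLog (p a b e) :=
    sum_congr rfl fun a _ => sum_comm
  rw [hAB, hAE, hjoint]
  ring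

/-- For an unambiguous distribution, the advantage
`I(A;B) − I(A;E)` equals `H(B) − H(E)`. -/
theorem stmt_3 {A B E : Type*} [Fintype A] [Fintype B] [Fintype E]
    (p : A → B → E → ℝ)
    (hp0 : ∀ a b e, 0 ≤ p a b e)
    (hp1 : ∑ a, ∑ b, ∑ e, p a b e = 1)
    (hunamb : Unambiguous p) :
    (((Hent fun a => ∑ b, ∑ e, p a b e) + (Hent fun b => ∑ a, ∑ e, p a b e)
        - (Hent fun ab : A × B => ∑ e, p ab.1 ab.2 e)) -
     ((Hent fun a => ∑ b, ∑ e, p a b e) + (Hent fun e => ∑ a, ∑ b, p a b e)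
        - (Hent fun ae : A × E => ∑ b, p ae.1 b ae.2))) =
    (Hent fun b => ∑ a, ∑ e, p a b e) - (Hent fun e => ∑ a, ∑ b, p a b e) :=
  stmt_3_general p hunamb
end

section
/- Let P_{ABE} be an unambiguous tripartite distribution, ψ_{ABE} the associated pure state, and ρ_{AB} = Tr_E |ψ⟩⟨ψ|. Then the coherent information I(A⟩B)_{ρ_{AB}} := S(ρ_B) − S(ρ_E) equals the classical advantage I(A;B) − I(A;E) of P_{ABE}, where S is von Neumann entropy and the right-hand side uses Shannon mutual informations of p. -/
open Finset

/-- Reduced density matrix on `B` of `|ψ⟩⟨ψ|` for `ψ = Σ √p(a,b,e)|a⟩|b⟩|e⟩`. -/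
noncomputable def rhoB {A B E : Type*} [Fintype A] [Fintype E]
    (p : A → B → E → ℝ) : Matrix B B ℝ :=
  Matrix.of fun b b' => ∑ a, ∑ e, Real.sqrt (p a b e) * Real.sqrt (p a b' e)

/-- Reduced density matrix on `E` of `|ψ⟩⟨ψ|`. -/
noncomputable def rhoE {A B E : Type*} [Fintype A] [Fintype B]
    (p : A → B → E → ℝ) : Matrix E E ℝ :=
  Matrix.of fun e e' => ∑ a, ∑ b, Real.sqrt (p a b e) * Real.sqrt (p a b e')

/-!
Unambiguity makes `ψ` a sum of product vectors with pairwise orthogonal `B`-parts and pairwise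
orthogonal `E`-parts, so both `ρ_B` and `ρ_E` are diagonal with the marginals of `p` on the
diagonal: `S(ρ_B) = H(B)` and `S(ρ_E) = H(E)`. Unambiguity also gives `H(AB) = H(ABE) = H(AE)`,
hence `I(A;B) − I(A;E) = H(B) − H(AB) − H(E) + H(AE) = H(B) − H(E)`.
-/

open Matrix Polynomial in
theorem Matrix.IsHermitian.sum_comp_eigenvalues_of_eq_diagonal {𝕜 n : Type*} [RCLike 𝕜]
    [Fintype n] [DecidableEq n] {M : Matrix n n 𝕜} (hM : M.IsHermitian) {d : n → ℝ}
    (hd : M = diagonal (RCLike.ofReal ∘ d)) (f : ℝ → ℝ) :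
    ∑ i, f (hM.eigenvalues i) = ∑ i, f (d i) := by
  have hroots : univ.val.map (RCLike.ofReal ∘ hM.eigenvalues : n → 𝕜) =
      univ.val.map (RCLike.ofReal ∘ d) := by
    rw [← hM.roots_charpoly_eq_eigenvalues, hd, charpoly_diagonal, roots_prod _ _
      (prod_ne_zero_iff.mpr fun i _ => X_sub_C_ne_zero _)]
    simp
  rw [← Multiset.map_map, ← Multiset.map_map] at hroots
  have heig := Multiset.map_injective RCLike.ofReal_injective hroots
  simpa [Multiset.map_map, Function.comp_def] using congrArg (fun m => (m.map f).sum) heig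

theorem Real.sqrt_mul_sqrt_of_subsingleton_support {n : Type*} [DecidableEq n] {q : n → ℝ}
    (hq0 : ∀ j, 0 ≤ q j) (hq : {j | q j ≠ 0}.Subsingleton) (j j' : n) :
    √(q j) * √(q j') = if j = j' then q j else 0 := by
  split_ifs with hjj'
  · subst hjj'
    exact Real.mul_self_sqrt (hq0 j)
  · by_cases hj : q j = 0
    · rw [hj, Real.sqrt_zero, zero_mul]
    · have hj' : q j' = 0 := by_contra fun hj' => hjj' (hq hj hj')
      rw [hj', Real.sqrt_zero, mul_zero]

theorem Real.negMulLog_sum_of_subsingleton_support {X : Type*} [Fintype X] {q : X → ℝ}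
    (hq : {x | q x ≠ 0}.Subsingleton) :
    Real.negMulLog (∑ x, q x) = ∑ x, Real.negMulLog (q x) := by
  rcases hq.eq_empty_or_singleton with hempty | ⟨x₀, hx₀⟩
  · have hzero : ∀ x, q x = 0 := fun x => by
      by_contra hx
      exact (Set.eq_empty_iff_forall_notMem.mp hempty) x hx
    simp [hzero]
  · have hzero : ∀ x, x ≠ x₀ → q x = 0 := fun x hx => by
      by_contra hqx
      exact hx (hx₀ ▸ hqx : x ∈ ({x₀} : Set X))
    rw [sum_eq_single x₀ (fun x _ hx => hzero x hx) (by simp),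
      sum_eq_single x₀ (fun x _ hx => by rw [hzero x hx, Real.negMulLog_zero]) (by simp)]

section Unambiguous

variable {A B E : Type*} [Fintype A] {p : A → B → E → ℝ}

theorem rhoB_eq_diagonal [Fintype E] [DecidableEq B] (hp0 : ∀ a b e, 0 ≤ p a b e)
    (hB : ∀ a e, {b | p a b e ≠ 0}.Subsingleton) :
    rhoB p = Matrix.diagonal fun b => ∑ a, ∑ e, p a b e := by
  ext b b'
  simp only [rhoB, Matrix.of_apply, Matrix.diagonal_apply,
    Real.sqrt_mul_sqrt_of_subsingleton_support (fun b => hp0 _ b _) (hB _ _)]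
  split_ifs <;> simp

theorem rhoE_eq_diagonal [Fintype B] [DecidableEq E] (hp0 : ∀ a b e, 0 ≤ p a b e)
    (hE : ∀ a b, {e | p a b e ≠ 0}.Subsingleton) :
    rhoE p = Matrix.diagonal fun e => ∑ a, ∑ b, p a b e := by
  ext e e'
  simp only [rhoE, Matrix.of_apply, Matrix.diagonal_apply,
    Real.sqrt_mul_sqrt_of_subsingleton_support (hp0 _ _) (hE _ _)]
  split_ifs <;> simp

theorem Hent_marginalAB_of_subsingleton [Fintype B] [Fintype E]
    (hE : ∀ a b, {e | p a b e ≠ 0}.Subsingleton) :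
    Hent (fun ab : A × B => ∑ e, p ab.1 ab.2 e) = ∑ a, ∑ b, ∑ e, Real.negMulLog (p a b e) := by
  simp only [Hent, Fintype.sum_prod_type, Real.negMulLog_sum_of_subsingleton_support (hE _ _)]

theorem Hent_marginalAE_of_subsingleton [Fintype B] [Fintype E]
    (hB : ∀ a e, {b | p a b e ≠ 0}.Subsingleton) :
    Hent (fun ae : A × E => ∑ b, p ae.1 b ae.2) = ∑ a, ∑ b, ∑ e, Real.negMulLog (p a b e) := by
  simp only [Hent, Fintype.sum_prod_type, Real.negMulLog_sum_of_subsingleton_support (hB _ _)]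
  exact sum_congr rfl fun a _ => sum_comm

end Unambiguous

theorem stmt_5_general {A B E : Type*} [Fintype A] [Fintype B] [Fintype E]
    [DecidableEq B] [DecidableEq E]
    (p : A → B → E → ℝ)
    (hp0 : ∀ a b e, 0 ≤ p a b e)
    (hunamb : Unambiguous p)
    (hB : (rhoB p).IsHermitian) (hE : (rhoE p).IsHermitian) :
    (∑ i, Real.negMulLog (hB.eigenvalues i)) -
      (∑ j, Real.negMulLog (hE.eigenvalues j)) =
    ((Hent fun a => ∑ b, ∑ e, p a b e) + (Hent fun b => ∑ a, ∑ e, p a b e)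
        - (Hent fun ab : A × B => ∑ e, p ab.1 ab.2 e)) -
    ((Hent fun a => ∑ b, ∑ e, p a b e) + (Hent fun e => ∑ a, ∑ b, p a b e)
        - (Hent fun ae : A × E => ∑ b, p ae.1 b ae.2)) := by
  obtain ⟨-, hsuppB, hsuppE⟩ := hunamb
  have hSB : ∑ i, Real.negMulLog (hB.eigenvalues i) = Hent fun b => ∑ a, ∑ e, p a b e :=
    hB.sum_comp_eigenvalues_of_eq_diagonal (rhoB_eq_diagonal hp0 hsuppB) _
  have hSE : ∑ j, Real.negMulLog (hE.eigenvalues j) = Hent fun e => ∑ a, ∑ b, p a b e :=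
    hE.sum_comp_eigenvalues_of_eq_diagonal (rhoE_eq_diagonal hp0 hsuppE) _
  rw [hSB, hSE, Hent_marginalAB_of_subsingleton hsuppE, Hent_marginalAE_of_subsingleton hsuppB]
  ring

/-- Coherent information `I(A⟩B) = S(ρ_B) − S(ρ_E)` (von Neumann entropies,
computed from the eigenvalues) equals the classical advantage
`I(A;B) − I(A;E)` of an unambiguous distribution. -/
theorem stmt_5 {A B E : Type*} [Fintype A] [Fintype B] [Fintype E]
    [DecidableEq B] [DecidableEq E]
    (p : A → B → E → ℝ)
    (hp0 : ∀ a b e, 0 ≤ p a b e)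
    (hp1 : ∑ a, ∑ b, ∑ e, p a b e = 1)
    (hunamb : Unambiguous p)
    (hB : (rhoB p).IsHermitian) (hE : (rhoE p).IsHermitian) :
    (∑ i, Real.negMulLog (hB.eigenvalues i)) -
      (∑ j, Real.negMulLog (hE.eigenvalues j)) =
    ((Hent fun a => ∑ b, ∑ e, p a b e) + (Hent fun b => ∑ a, ∑ e, p a b e)
        - (Hent fun ab : A × B => ∑ e, p ab.1 ab.2 e)) -
    ((Hent fun a => ∑ b, ∑ e, p a b e) + (Hent fun e => ∑ a, ∑ b, p a b e)
        - (Hent fun ae : A × E => ∑ b, p ae.1 b ae.2)) :=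
  stmt_5_general p hp0 hunamb hB hE
end

section
/- Let P_{ABE} be a tripartite distribution with: for all a,b, at most one e has p(a,b,e) ≠ 0. Define e(a,b) as the unique e with p(a,b,e) ≠ 0 (or a special 'null' value if none exists) and p(a,b) = Σ_e p(a,b,e). Then ρ_{AB} (the partial trace over E of the pure state √P_{ABE}) is PT-invariant if and only if the following holds: whenever e(a,b) = e(a',b') ≠ null for some a ≠ a' and b ≠ b', we have both (1) e(a,b') = e(a',b) ≠ null, and (2) p(a,b)·p(a',b') = p(a,b')·p(a',b). -/
open Finset

noncomputable def rhoAB {A B E : Type*} [Fintype E]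
    (p : A → B → E → ℝ) : Matrix (A × B) (A × B) ℝ :=
  Matrix.of fun x y => ∑ e, Real.sqrt (p x.1 x.2 e * p y.1 y.2 e)

/-- Partial transpose on the `B` system. -/
def ptB {A B : Type*} (ρ : Matrix (A × B) (A × B) ℝ) : Matrix (A × B) (A × B) ℝ :=
  Matrix.of fun x y => ρ (x.1, y.2) (y.1, x.2)

/-
Since `p(a,b,·)` is supported on at most the point `e(a,b)`, the entry of `ρ_AB` at
`((a,b),(a',b'))` is `√(p(a,b) p(a',b'))` when `e(a,b) = e(a',b')` and `0` otherwise
(both sides vanish when `e(a,b)` is null, as then `p(a,b) = 0`). Partial transposition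
swaps this entry with the one at `((a,b'),(a',b))`. If the conditions hold, every nonzero
entry equals its swapped partner; applying this to both members of a pair shows that all
pairs agree. Conversely a nonzero entry must have a nonzero partner, which forces (1), and
squaring the equality of the two square roots gives (2).
-/

theorem ptB_eq_self_iff {A B : Type*} (ρ : Matrix (A × B) (A × B) ℝ) :
    ptB ρ = ρ ↔ ∀ a a' b b', ρ (a, b') (a', b) = ρ (a, b) (a', b') := by
  refine ⟨fun h a a' b b' => congrFun (congrFun h (a, b)) (a', b'), fun h => ?_⟩
  ext ⟨a, b⟩ ⟨a', b'⟩
  exact h a a' b b'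

section LabelMatrix

variable {A B α : Type*}

open Classical in
noncomputable def labelMatrix (f : A → B → Option α) (q : A → B → ℝ) :
    Matrix (A × B) (A × B) ℝ :=
  Matrix.of fun x y => if f x.1 x.2 = f y.1 y.2 then √(q x.1 x.2 * q y.1 y.2) else 0

variable {f : A → B → Option α} {q : A → B → ℝ}

theorem labelMatrix_ne_zero_iff (hq0 : ∀ a b, 0 ≤ q a b)
    (hq : ∀ a b, q a b = 0 ↔ f a b = none) {a a' : A} {b b' : B} :
    labelMatrix f q (a, b) (a', b') ≠ 0 ↔ ∃ e, f a b = some e ∧ f a' b' = some e := by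
  have hpos : ∀ {a b e}, f a b = some e → 0 < q a b := fun h =>
    (hq0 _ _).lt_of_ne fun hz => by simp [(hq _ _).mp hz.symm] at h
  rw [labelMatrix, Matrix.of_apply]
  split_ifs with heq
  · constructor
    · intro hne
      have hsome : f a b ≠ none := fun hnone => hne (by simp [(hq a b).mpr hnone])
      obtain ⟨e, he⟩ := Option.ne_none_iff_exists'.mp hsome
      exact ⟨e, he, heq ▸ he⟩
    · rintro ⟨e, he, he'⟩
      exact Real.sqrt_ne_zero'.mpr (mul_pos (hpos he) (hpos he'))
  · simp only [ne_eq, not_true_eq_false, false_iff, not_exists, not_and]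
    exact fun e he he' => heq (he.trans he'.symm)

theorem ptB_labelMatrix_eq_self_iff (hq0 : ∀ a b, 0 ≤ q a b)
    (hq : ∀ a b, q a b = 0 ↔ f a b = none) :
    ptB (labelMatrix f q) = labelMatrix f q ↔
      ∀ a a' b b' e₀, a ≠ a' → b ≠ b' → f a b = some e₀ → f a' b' = some e₀ →
        (f a b' = f a' b ∧ (f a b').isSome ∧ q a b * q a' b' = q a b' * q a' b) := by
  rw [ptB_eq_self_iff]
  constructor
  · intro h a a' b b' e₀ _ _ h₁ h₂
    have hne : labelMatrix f q (a, b') (a', b) ≠ 0 := by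
      rw [h, labelMatrix_ne_zero_iff hq0 hq]
      exact ⟨e₀, h₁, h₂⟩
    obtain ⟨e₁, h₃, h₄⟩ := (labelMatrix_ne_zero_iff hq0 hq).mp hne
    refine ⟨h₃.trans h₄.symm, by simp [h₃], ?_⟩
    have hsqrt := h a a' b b'
    simp only [labelMatrix, Matrix.of_apply, h₁, h₂, h₃, h₄, if_true] at hsqrt
    rw [Real.sqrt_inj (mul_nonneg (hq0 _ _) (hq0 _ _)) (mul_nonneg (hq0 _ _) (hq0 _ _))] at hsqrt
    exact hsqrt.symm
  · intro h
    -- Enough to match every nonzero entry with its partner: the partner relation is symmetric.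
    suffices hmatch : ∀ a a' b b', labelMatrix f q (a, b) (a', b') ≠ 0 →
        labelMatrix f q (a, b') (a', b) = labelMatrix f q (a, b) (a', b') by
      intro a a' b b'
      by_cases hz : labelMatrix f q (a, b) (a', b') = 0
      · by_cases hz' : labelMatrix f q (a, b') (a', b) = 0
        · rw [hz, hz']
        · exact (hmatch a a' b' b hz').symm
      · exact hmatch a a' b b' hz
    intro a a' b b' hne
    obtain ⟨e₀, h₁, h₂⟩ := (labelMatrix_ne_zero_iff hq0 hq).mp hne
    by_cases ha : a = a'
    · subst ha
      simp only [labelMatrix, Matrix.of_apply, h₁, h₂, mul_comm]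
    by_cases hb : b = b'
    · rw [hb]
    obtain ⟨heq, -, hprod⟩ := h a a' b b' e₀ ha hb h₁ h₂
    simp only [labelMatrix, Matrix.of_apply, heq, h₁, h₂, if_true, hprod]

end LabelMatrix

section PureState

variable {A B E : Type*} {p : A → B → E → ℝ} {eab : A → B → Option E}

theorem eq_zero_of_eab_ne (heab : ∀ a b e, eab a b = some e ↔ p a b e ≠ 0) {a : A} {b : B}
    {e : E} (h : eab a b ≠ some e) : p a b e = 0 :=
  not_not.mp (mt (heab a b e).mpr h)

theorem sum_eq_elim_eab [Fintype E] (heab : ∀ a b e, eab a b = some e ↔ p a b e ≠ 0)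
    (a : A) (b : B) (g : E → ℝ) (hg : ∀ e, p a b e = 0 → g e = 0) :
    ∑ e, g e = (eab a b).elim 0 g := by
  cases h : eab a b with
  | none => exact Finset.sum_eq_zero fun e _ => hg e (eq_zero_of_eab_ne heab (by simp [h]))
  | some e₀ =>
    exact Fintype.sum_eq_single e₀ fun e he =>
      hg e (eq_zero_of_eab_ne heab (by simp [h, Ne.symm he]))

theorem rhoAB_eq_labelMatrix [Fintype E] (heab : ∀ a b e, eab a b = some e ↔ p a b e ≠ 0) :
    rhoAB p = labelMatrix eab fun a b => ∑ e, p a b e := by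
  ext ⟨a, b⟩ ⟨a', b'⟩
  simp only [rhoAB, labelMatrix, Matrix.of_apply]
  rw [sum_eq_elim_eab heab a b _ fun e h => by simp [h],
    sum_eq_elim_eab heab a b (p a b) fun _ h => h,
    sum_eq_elim_eab heab a' b' (p a' b') fun _ h => h]
  cases h : eab a b with
  | none => simp
  | some e₀ =>
    by_cases he : eab a' b' = some e₀
    · simp [he]
    · simp [eq_zero_of_eab_ne heab he, Ne.symm he]

end PureState

theorem stmt_7_general {A B E : Type*} [Fintype E]
    (p : A → B → E → ℝ)
    (hp0 : ∀ a b e, 0 ≤ p a b e)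
    (eab : A → B → Option E)
    (heab : ∀ a b e, eab a b = some e ↔ p a b e ≠ 0)
    (pab : A → B → ℝ)
    (hpab : ∀ a b, pab a b = ∑ e, p a b e) :
    ptB (rhoAB p) = rhoAB p ↔
      ∀ a a' b b' e₀, a ≠ a' → b ≠ b' →
        eab a b = some e₀ → eab a' b' = some e₀ →
        (eab a b' = eab a' b ∧ (eab a b').isSome ∧
          pab a b * pab a' b' = pab a b' * pab a' b) := by
  obtain rfl : pab = fun a b => ∑ e, p a b e := funext₂ hpab
  have hpab_zero : ∀ a b, ∑ e, p a b e = 0 ↔ eab a b = none := fun a b => by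
    rw [sum_eq_elim_eab heab a b (p a b) fun _ h => h]
    cases h : eab a b with
    | none => simp
    | some e => simpa using (heab a b e).mp h
  rw [rhoAB_eq_labelMatrix heab]
  exact ptB_labelMatrix_eq_self_iff (fun a b => Finset.sum_nonneg fun e _ => hp0 a b e) hpab_zero

/-- Characterization of PT-invariance of `ρ_AB` in terms of the function
`e(a,b)` (here `eab : A → B → Option E`, with `none` playing the role of the
null symbol) and the reduced distribution `p(a,b)`:  `ρ_AB` is PT-invariant iff
whenever `e(a,b) = e(a',b') ≠ null` with `a ≠ a'` and `b ≠ b'`, we have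
(1) `e(a,b') = e(a',b) ≠ null` and (2) `p(a,b)p(a',b') = p(a,b')p(a',b)`. -/
theorem stmt_7 {A B E : Type*} [Fintype A] [Fintype B] [Fintype E]
    (p : A → B → E → ℝ)
    (hp0 : ∀ a b e, 0 ≤ p a b e)
    (hp1 : ∑ a, ∑ b, ∑ e, p a b e = 1)
    (hE : ∀ a b, {e | p a b e ≠ 0}.Subsingleton)
    (eab : A → B → Option E)
    (heab : ∀ a b e, eab a b = some e ↔ p a b e ≠ 0)
    (pab : A → B → ℝ)
    (hpab : ∀ a b, pab a b = ∑ e, p a b e) :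
    ptB (rhoAB p) = rhoAB p ↔
      ∀ a a' b b' e₀, a ≠ a' → b ≠ b' →
        eab a b = some e₀ → eab a' b' = some e₀ →
        (eab a b' = eab a' b ∧ (eab a b').isSome ∧
          pab a b * pab a' b' = pab a b' * pab a' b) :=
  stmt_7_general p hp0 eab heab pab hpab
end

section
/- In the 4×5 example, the function f(a,b,c,d,e) := −a − c − e + h(a) − h(d) + h(e) − h(a+b) + h(b+d) + h(c+d) − h(c+d+e), where h(p) = −p·log₂(p), satisfies f(1/10, 1/10, 3/8, 1/40, 2/5) > 0. -/
/-!
Every argument of `hbit` at this point has the form `2^m · 5^n`, so the value collapses to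
`13/40 − (log₂ 5)/8`, which is positive because `5^5 < 2^13`.
-/

/-- `h(p) = −p·log₂ p` (with `h(0) = 0`, as `Real.logb 2 0 = 0`). -/
noncomputable def hbit (p : ℝ) : ℝ := -(p * Real.logb 2 p)

/-- The key-rate expression for the 4×5 example. -/
noncomputable def fkey (a b c d e : ℝ) : ℝ :=
  -a - c - e + hbit a - hbit d + hbit e
    - hbit (a + b) + hbit (b + d) + hbit (c + d) - hbit (c + d + e)

open Real

lemma hbit_two_zpow_mul_zpow (m n : ℤ) {x : ℝ} (hx : 0 < x) :
    hbit (2 ^ m * x ^ n) = -(2 ^ m * x ^ n) * (m + n * logb 2 x) := by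
  have hlog2 : log 2 ≠ 0 := by positivity
  simp only [hbit, logb]
  rw [log_mul (by positivity) (by positivity), log_zpow, log_zpow]
  field_simp

lemma logb_two_five_lt : logb 2 5 < 13 / 5 := by
  rw [logb_lt_iff_lt_rpow one_lt_two (by norm_num)]
  calc (5 : ℝ) = (5 ^ 5) ^ (1 / 5 : ℝ) := by
        rw [← rpow_natCast, ← rpow_mul (by norm_num)]; norm_num
    _ < (2 ^ 13) ^ (1 / 5 : ℝ) := by gcongr; norm_num
    _ = 2 ^ (13 / 5 : ℝ) := by
        rw [← rpow_natCast, ← rpow_mul (by norm_num)]; norm_num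

lemma fkey_eq : fkey (1/10) (1/10) (3/8) (1/40) (2/5) = 13 / 40 - logb 2 5 / 8 := by
  have h : ∀ m n : ℤ, hbit (2 ^ m * 5 ^ n) = -(2 ^ m * 5 ^ n) * (m + n * logb 2 5) :=
    fun m n => hbit_two_zpow_mul_zpow m n (by norm_num)
  have h10 := h (-1) (-1)
  have h40 := h (-3) (-1)
  have h25 := h 1 (-1)
  have h5 := h 0 (-1)
  have h8 := h (-3) 0
  have h45 := h 2 (-1)
  norm_num at h10 h40 h25 h5 h8 h45
  unfold fkey
  norm_num [h10, h40, h25, h5, h8, h45]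
  ring

/-- `f(1/10, 1/10, 3/8, 1/40, 2/5) > 0` (numerically ≈ 0.0347590). -/
theorem stmt_13 : 0 < fkey (1/10) (1/10) (3/8) (1/40) (2/5) := by
  rw [fkey_eq]
  linarith [logb_two_five_lt]
end

section
/- Let p be unambiguous and ρ_{AB} = Tr_E|√P_{ABE}⟩⟨√P_{ABE}|. Then ρ_{AB} = Σ_e p(e)·|φ_e⟩⟨φ_e|, where p(e) = Σ_{a,b} p(a,b,e) and |φ_e⟩ = Σ_{a,b} √(p(a,b,e)/p(e)) |a⟩|b⟩ (for p(e) > 0) are mutually orthogonal unit vectors; in particular the nonzero eigenvalues of ρ_{AB} are exactly the nonzero marginal probabilities p(e), and S(ρ_{AB}) = H(E). -/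
open Finset

open scoped Classical

/-- Marginal on `E`. -/
noncomputable def margE {A B E : Type*} [Fintype A] [Fintype B]
    (p : A → B → E → ℝ) : E → ℝ := fun e => ∑ a, ∑ b, p a b e

/-- Normalized eigenvector `φ_e`. -/
noncomputable def phiE {A B E : Type*} [Fintype A] [Fintype B]
    (p : A → B → E → ℝ) (e : E) : A × B → ℝ :=
  fun x => Real.sqrt (p x.1 x.2 e / margE p e)

/- Writing `√P` for the `E × (A × B)` matrix with entries `√p(a,b,e)`, we have `ρ_AB = √Pᵀ √P`,
while unambiguity (`p(a,b,e) p(a,b,e') = 0` for `e ≠ e'`) makes `√P √Pᵀ` the diagonal matrix of the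
marginals `p(e)`. Since `MN` and `NM` have the same nonzero eigenvalues (their characteristic
polynomials agree up to a power of `X`), the nonzero spectrum of `ρ_AB` is that of `diag p(e)`, and
the entropies agree because `negMulLog 0 = 0`. The rank-one decomposition and the orthonormality of
the `φ_e = √P_e / √p(e)` are entrywise restatements of these two matrix identities. -/

open Polynomial Matrix

theorem Matrix.filter_roots_charpoly_mul_comm {m n R : Type*} [Fintype m] [Fintype n]
    [DecidableEq m] [DecidableEq n] [CommRing R] [IsDomain R] [DecidableEq R]
    (M : Matrix m n R) (N : Matrix n m R) :
    (M * N).charpoly.roots.filter (· ≠ 0) = (N * M).charpoly.roots.filter (· ≠ 0) := by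
  have h := congrArg roots (M.charpoly_mul_comm' N)
  rw [roots_mul ((monic_X_pow _).mul (charpoly_monic _)).ne_zero,
    roots_mul ((monic_X_pow _).mul (charpoly_monic _)).ne_zero, roots_X_pow, roots_X_pow] at h
  simpa [Multiset.filter_add, Multiset.filter_nsmul, Multiset.filter_singleton] using
    congrArg (Multiset.filter (· ≠ 0)) h

theorem Matrix.roots_charpoly_diagonal {n R : Type*} [Fintype n] [DecidableEq n] [CommRing R]
    [IsDomain R] (d : n → R) :
    (Matrix.diagonal d).charpoly.roots = Finset.univ.val.map d := by
  rw [charpoly_diagonal,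
    roots_prod _ _ (Finset.prod_ne_zero_iff.mpr fun i _ => X_sub_C_ne_zero _)]
  simp [Multiset.bind_singleton]

theorem Multiset.sum_map_filter_ne_zero {α M : Type*} [Zero α] [DecidableEq α] [AddCommMonoid M]
    {f : α → M} (hf : f 0 = 0) (s : Multiset α) :
    ((s.filter (· ≠ 0)).map f).sum = (s.map f).sum := by
  conv_rhs => rw [← Multiset.filter_add_not (· ≠ 0) s]
  have hzero : ((s.filter (¬· ≠ 0)).map f).sum = 0 :=
    Multiset.sum_eq_zero fun y hy => by
      obtain ⟨x, hx, rfl⟩ := Multiset.mem_map.mp hy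
      rw [not_not.mp (Multiset.mem_filter.mp hx).2, hf]
  rw [Multiset.map_add, Multiset.sum_add, hzero, add_zero]

theorem Fintype.sum_comp_eq_of_filter_ne_zero {ι κ α M : Type*} [Fintype ι] [Fintype κ] [Zero α]
    [DecidableEq α] [AddCommMonoid M] {f : α → M} (hf : f 0 = 0) {u : ι → α} {v : κ → α}
    (h : (Finset.univ.val.map u).filter (· ≠ 0) = (Finset.univ.val.map v).filter (· ≠ 0)) :
    ∑ i, f (u i) = ∑ k, f (v k) := by
  calc ∑ i, f (u i) = (((Finset.univ.val.map u).filter (· ≠ 0)).map f).sum := by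
        rw [Multiset.sum_map_filter_ne_zero hf, Multiset.map_map]; rfl
    _ = ∑ k, f (v k) := by
        rw [h, Multiset.sum_map_filter_ne_zero hf, Multiset.map_map]; rfl

section Unambiguous

variable {A B E : Type*} {p : A → B → E → ℝ}

/-- The purification `|√P_ABE⟩` as an `E × (A × B)` matrix. -/
noncomputable def sqrtP (p : A → B → E → ℝ) : Matrix E (A × B) ℝ :=
  Matrix.of fun e x => √(p x.1 x.2 e)

theorem mul_eq_zero_of_subsingleton_support (hE : ∀ a b, {e | p a b e ≠ 0}.Subsingleton)
    {e e' : E} (h : e ≠ e') (a : A) (b : B) : p a b e * p a b e' = 0 := by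
  by_contra hne
  exact h (hE a b (left_ne_zero_of_mul hne) (right_ne_zero_of_mul hne))

theorem transpose_sqrtP_mul_sqrtP [Fintype E] (hp0 : ∀ a b e, 0 ≤ p a b e) :
    (sqrtP p)ᵀ * sqrtP p = rhoAB p := by
  ext x y
  simp only [Matrix.mul_apply, Matrix.transpose_apply, sqrtP, Matrix.of_apply, rhoAB]
  exact Finset.sum_congr rfl fun e _ => (Real.sqrt_mul (hp0 _ _ _) _).symm

variable [Fintype A] [Fintype B]

theorem margE_nonneg (hp0 : ∀ a b e, 0 ≤ p a b e) (e : E) : 0 ≤ margE p e :=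
  Finset.sum_nonneg fun a _ => Finset.sum_nonneg fun b _ => hp0 a b e

theorem eq_zero_of_margE_eq_zero (hp0 : ∀ a b e, 0 ≤ p a b e) {e : E} (h : margE p e = 0)
    (a : A) (b : B) : p a b e = 0 := by
  rw [margE, Fintype.sum_eq_zero_iff_of_nonneg fun a => Finset.sum_nonneg fun b _ => hp0 a b e]
    at h
  exact congrFun ((Fintype.sum_eq_zero_iff_of_nonneg (hp0 a · e)).mp (congrFun h a)) b

theorem phiE_eq_sqrtP_div (hp0 : ∀ a b e, 0 ≤ p a b e) (e : E) (x : A × B) :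
    phiE p e x = sqrtP p e x / √(margE p e) :=
  Real.sqrt_div' _ (margE_nonneg hp0 e)

theorem sqrtP_mul_transpose_sqrtP (hp0 : ∀ a b e, 0 ≤ p a b e)
    (hE : ∀ a b, {e | p a b e ≠ 0}.Subsingleton) :
    sqrtP p * (sqrtP p)ᵀ = Matrix.diagonal (margE p) := by
  ext e e'
  simp only [Matrix.mul_apply, Matrix.transpose_apply, sqrtP, Matrix.of_apply,
    ← Real.sqrt_mul (hp0 _ _ _), Fintype.sum_prod_type]
  rcases eq_or_ne e e' with rfl | h
  · simp [Real.sqrt_mul_self (hp0 _ _ _), margE]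
  · simp [mul_eq_zero_of_subsingleton_support hE h, h]

theorem sum_phiE_mul_phiE (hp0 : ∀ a b e, 0 ≤ p a b e)
    (hE : ∀ a b, {e | p a b e ≠ 0}.Subsingleton) {e : E} (he : margE p e ≠ 0) (e' : E) :
    ∑ x, phiE p e x * phiE p e' x = if e = e' then 1 else 0 := by
  have hentry : ∑ x, sqrtP p e x * sqrtP p e' x = Matrix.diagonal (margE p) e e' := by
    rw [← sqrtP_mul_transpose_sqrtP hp0 hE]; rfl
  simp only [phiE_eq_sqrtP_div hp0, div_mul_div_comm, ← Finset.sum_div, hentry]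
  rcases eq_or_ne e e' with rfl | h
  · rw [Matrix.diagonal_apply_eq, Real.mul_self_sqrt (margE_nonneg hp0 e), div_self he, if_pos rfl]
  · rw [Matrix.diagonal_apply_ne _ h, zero_div, if_neg h]

variable [Fintype E]

theorem rhoAB_apply_eq_sum (hp0 : ∀ a b e, 0 ≤ p a b e) (x y : A × B) :
    rhoAB p x y = ∑ e, margE p e * (phiE p e x * phiE p e y) := by
  rw [← transpose_sqrtP_mul_sqrtP hp0, Matrix.mul_apply]
  refine Finset.sum_congr rfl fun e _ => ?_
  rcases eq_or_ne (margE p e) 0 with h | h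
  · simp [sqrtP, eq_zero_of_margE_eq_zero hp0 h, h]
  · have hm := Real.sq_sqrt (margE_nonneg hp0 e)
    have hsqrt : √(margE p e) ≠ 0 := (Real.sqrt_pos.mpr ((margE_nonneg hp0 e).lt_of_ne' h)).ne'
    rw [phiE_eq_sqrtP_div hp0, phiE_eq_sqrtP_div hp0, Matrix.transpose_apply]
    field_simp
    rw [hm]

end Unambiguous

theorem stmt_15_general {A B E : Type*} [Fintype A] [Fintype B] [Fintype E]
    (p : A → B → E → ℝ)
    (hp0 : ∀ a b e, 0 ≤ p a b e)
    (hunamb : Unambiguous p)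
    (hH : (rhoAB p).IsHermitian) :
    (∀ x y, rhoAB p x y = ∑ e, margE p e * (phiE p e x * phiE p e y)) ∧
    (∀ e e', margE p e ≠ 0 → margE p e' ≠ 0 →
      ∑ x, phiE p e x * phiE p e' x = if e = e' then 1 else 0) ∧
    ((Finset.univ.val.map hH.eigenvalues).filter (· ≠ 0) =
      (Finset.univ.val.map (margE p)).filter (· ≠ 0)) ∧
    (∑ i, Real.negMulLog (hH.eigenvalues i) =
      ∑ e, Real.negMulLog (margE p e)) := by
  obtain ⟨-, -, hE⟩ := hunamb
  have hroots : (rhoAB p).charpoly.roots = Finset.univ.val.map hH.eigenvalues := by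
    rw [hH.roots_charpoly_eq_eigenvalues, RCLike.ofReal_real_eq_id, Function.id_comp]
  have hspec : (Finset.univ.val.map hH.eigenvalues).filter (· ≠ 0) =
      (Finset.univ.val.map (margE p)).filter (· ≠ 0) := by
    rw [← hroots, ← transpose_sqrtP_mul_sqrtP hp0, Matrix.filter_roots_charpoly_mul_comm,
      sqrtP_mul_transpose_sqrtP hp0 hE, Matrix.roots_charpoly_diagonal]
  refine ⟨rhoAB_apply_eq_sum hp0, fun _ e' he _ => sum_phiE_mul_phiE hp0 hE he e', hspec, ?_⟩
  exact Fintype.sum_comp_eq_of_filter_ne_zero Real.negMulLog_zero hspec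

/-- `ρ_AB = Σ_e p(e) |φ_e⟩⟨φ_e|` with the `φ_e` (for `p(e) > 0`) orthonormal;
the nonzero eigenvalues of `ρ_AB` are exactly the nonzero marginals `p(e)`
(as multisets), and `S(ρ_AB) = H(E)`. -/
theorem stmt_15 {A B E : Type*} [Fintype A] [Fintype B] [Fintype E]
    (p : A → B → E → ℝ)
    (hp0 : ∀ a b e, 0 ≤ p a b e)
    (hp1 : ∑ a, ∑ b, ∑ e, p a b e = 1)
    (hunamb : Unambiguous p)
    (hH : (rhoAB p).IsHermitian) :
    (∀ x y, rhoAB p x y = ∑ e, margE p e * (phiE p e x * phiE p e y)) ∧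
    (∀ e e', margE p e ≠ 0 → margE p e' ≠ 0 →
      ∑ x, phiE p e x * phiE p e' x = if e = e' then 1 else 0) ∧
    ((Finset.univ.val.map hH.eigenvalues).filter (· ≠ 0) =
      (Finset.univ.val.map (margE p)).filter (· ≠ 0)) ∧
    (∑ i, Real.negMulLog (hH.eigenvalues i) =
      ∑ e, Real.negMulLog (margE p e)) :=
  stmt_15_general p hp0 hunamb hH
end
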